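/- Let A, A_s ∈ ℝ^{d×d} be invertible with E = A_s − A, and suppose I + E·A⁻¹ and I + (1/2)E·A⁻¹ are invertible. Then ‖A_s⁻¹ − A⁻¹‖ ≤ [(1/2)‖A⁻¹‖ + (1/4)‖A⁻¹‖²‖E‖·‖(I + (1/2)E A⁻¹)⁻¹‖] · ‖A⁻¹‖·‖E‖·(1 + ‖(I + E A⁻¹)⁻¹‖), where ‖·‖ is the spectral norm. -/
import Mathlib


open Matrix MeasureTheory ProbabilityTheory

set_option maxHeartbeats 1000000
set_option synthInstance.maxHeartbeats 400000

/-- The spectral (`ℓ² → ℓ²` operator) norm of a real `d × d` matrix. -/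
noncomputable def specNorm {d : ℕ} (M : Matrix (Fin d) (Fin d) ℝ) : ℝ :=
  ‖Matrix.toEuclideanCLM (𝕜 := ℝ) M‖

lemma specNorm_nonneg {d : ℕ} (M : Matrix (Fin d) (Fin d) ℝ) : 0 ≤ specNorm M :=
  norm_nonneg _

lemma specNorm_mul_le {d : ℕ} (M N : Matrix (Fin d) (Fin d) ℝ) :
    specNorm (M * N) ≤ specNorm M * specNorm N := by
  simp only [specNorm, _root_.map_mul]; exact norm_mul_le _ _

lemma specNorm_add_le {d : ℕ} (M N : Matrix (Fin d) (Fin d) ℝ) :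
    specNorm (M + N) ≤ specNorm M + specNorm N := by
  simp only [specNorm, map_add]; exact norm_add_le _ _

lemma specNorm_sub_le {d : ℕ} (M N : Matrix (Fin d) (Fin d) ℝ) :
    specNorm (M - N) ≤ specNorm M + specNorm N := by
  simp only [specNorm, map_sub]; exact norm_sub_le _ _

lemma specNorm_neg {d : ℕ} (M : Matrix (Fin d) (Fin d) ℝ) :
    specNorm (-M) = specNorm M := by
  simp only [specNorm, map_neg, norm_neg]

lemma specNorm_smul {d : ℕ} (r : ℝ) (M : Matrix (Fin d) (Fin d) ℝ) :
    specNorm (r • M) = |r| * specNorm M := by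
  simp only [specNorm, _root_.map_smul, ]
  rw [show |r| = ‖r‖ from (Real.norm_eq_abs r).symm]; exact norm_smul r (Matrix.toEuclideanCLM (𝕜 := ℝ) M)

lemma specNorm_one_le {d : ℕ} : specNorm (1 : Matrix (Fin d) (Fin d) ℝ) ≤ 1 := by
  simp only [specNorm, _root_.map_one]
  exact ContinuousLinearMap.norm_id_le

/-- Deterministic core of the Monte Carlo error bound for the
stochastic matrix inverse: with `E = A_s − A`,
`‖A_s⁻¹ − A⁻¹‖ ≤ [(1/2)‖A⁻¹‖ + (1/4)‖A⁻¹‖²‖E‖‖(I + (1/2)E A⁻¹)⁻¹‖] ·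
  ‖A⁻¹‖‖E‖(1 + ‖(I + E A⁻¹)⁻¹‖)`. -/
theorem stmt8 {d : ℕ} (A As E : Matrix (Fin d) (Fin d) ℝ)
    (hA : IsUnit A.det) (hAs : IsUnit As.det) (hE : E = As - A)
    (h1 : IsUnit ((1 : Matrix (Fin d) (Fin d) ℝ) + E * A⁻¹).det)
    (h2 : IsUnit ((1 : Matrix (Fin d) (Fin d) ℝ) + (1 / 2 : ℝ) • (E * A⁻¹)).det) :
    specNorm (As⁻¹ - A⁻¹) ≤
      ((1 / 2) * specNorm A⁻¹ +
        (1 / 4) * (specNorm A⁻¹) ^ 2 * specNorm E *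
          specNorm (((1 : Matrix (Fin d) (Fin d) ℝ) + (1 / 2 : ℝ) • (E * A⁻¹))⁻¹)) *
      (specNorm A⁻¹ * specNorm E *
        (1 + specNorm (((1 : Matrix (Fin d) (Fin d) ℝ) + E * A⁻¹)⁻¹))) := by
  set F := E * A⁻¹ with hF
  set B := (1 : Matrix (Fin d) (Fin d) ℝ) + F with hBdef
  set C := (1 : Matrix (Fin d) (Fin d) ℝ) + (1 / 2 : ℝ) • F with hCdef
  have hBB : B * B⁻¹ = 1 := Matrix.mul_nonsing_inv _ h1
  have hBB' : B⁻¹ * B = 1 := Matrix.nonsing_inv_mul _ h1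
  have hCC : C⁻¹ * C = 1 := Matrix.nonsing_inv_mul _ h2
  have hAinvA : A⁻¹ * A = 1 := Matrix.nonsing_inv_mul _ hA
  have hAsBA : As = B * A := by
    rw [hBdef, hF, add_mul, one_mul, mul_assoc, hAinvA, mul_one, hE]
    abel
  have hAsinv : As⁻¹ = A⁻¹ * B⁻¹ := by rw [hAsBA, Matrix.mul_inv_rev]
  have hFB : F * B⁻¹ = 1 - B⁻¹ := by
    have h := hBB
    rw [hBdef, add_mul, one_mul] at h
    linear_combination (norm := abel) h
  have hBF : B⁻¹ * F = 1 - B⁻¹ := by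
    have h := hBB'
    rw [hBdef, mul_add, mul_one] at h
    linear_combination (norm := abel) h
  have hCinv : C⁻¹ = 1 - (1 / 2 : ℝ) • (C⁻¹ * F) := by
    have h := hCC
    rw [hCdef, mul_add, mul_one, mul_smul_comm] at h
    linear_combination (norm := abel) h
  have hCkey : C * (B⁻¹ - 1) = -((1 / 2 : ℝ) • ((B⁻¹ + 1) * F)) := by
    rw [hCdef, add_mul, one_mul, smul_mul_assoc, mul_sub, mul_one, hFB,
      add_mul, hBF, one_mul]
    simp only [smul_sub, smul_add]
    module
  have step : B⁻¹ - 1 = -((1 / 2 : ℝ) • (C⁻¹ * ((B⁻¹ + 1) * F))) := by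
    calc B⁻¹ - 1 = C⁻¹ * (C * (B⁻¹ - 1)) := by rw [← mul_assoc, hCC, one_mul]
      _ = C⁻¹ * (-((1 / 2 : ℝ) • ((B⁻¹ + 1) * F))) := by rw [hCkey]
      _ = -((1 / 2 : ℝ) • (C⁻¹ * ((B⁻¹ + 1) * F))) := by
          rw [mul_neg, mul_smul_comm]
  have key : As⁻¹ - A⁻¹ =
      -(((1 / 2 : ℝ) • (A⁻¹ * C⁻¹)) * ((B⁻¹ + 1) * F)) := by
    calc As⁻¹ - A⁻¹ = A⁻¹ * (B⁻¹ - 1) := by rw [hAsinv, mul_sub, mul_one]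
      _ = A⁻¹ * (-((1 / 2 : ℝ) • (C⁻¹ * ((B⁻¹ + 1) * F)))) := by rw [← step]
      _ = -(((1 / 2 : ℝ) • (A⁻¹ * C⁻¹)) * ((B⁻¹ + 1) * F)) := by
          rw [mul_neg, mul_smul_comm, smul_mul_assoc, mul_assoc]
  have hX : (1 / 2 : ℝ) • (A⁻¹ * C⁻¹) =
      (1 / 2 : ℝ) • A⁻¹ - (1 / 4 : ℝ) • (A⁻¹ * (C⁻¹ * F)) := by
    conv_lhs => rw [hCinv]
    rw [mul_sub, mul_one, mul_smul_comm, smul_sub, smul_smul]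
    norm_num
  set a := specNorm A⁻¹ with ha'
  set e := specNorm E with he'
  set b := specNorm B⁻¹ with hb'
  set c := specNorm C⁻¹ with hc'
  have ha : 0 ≤ a := specNorm_nonneg _
  have he : 0 ≤ e := specNorm_nonneg _
  have hb : 0 ≤ b := specNorm_nonneg _
  have hc : 0 ≤ c := specNorm_nonneg _
  have m1 : specNorm F ≤ e * a := specNorm_mul_le _ _
  have m2 : specNorm (C⁻¹ * F) ≤ c * (e * a) :=
    le_trans (specNorm_mul_le _ _) (mul_le_mul_of_nonneg_left m1 hc)
  have m3 : specNorm (A⁻¹ * (C⁻¹ * F)) ≤ a * (c * (e * a)) :=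
    le_trans (specNorm_mul_le _ _) (mul_le_mul_of_nonneg_left m2 ha)
  have hXn : specNorm ((1 / 2 : ℝ) • (A⁻¹ * C⁻¹)) ≤
      1 / 2 * a + 1 / 4 * (a * (c * (e * a))) := by
    rw [hX]
    refine le_trans (specNorm_sub_le _ _) ?_
    rw [specNorm_smul, specNorm_smul]
    have h12 : |(1 / 2 : ℝ)| = 1 / 2 := by norm_num
    have h14 : |(1 / 4 : ℝ)| = 1 / 4 := by norm_num
    rw [h12, h14]
    nlinarith [m3]
  have hYn : specNorm ((B⁻¹ + 1) * F) ≤ (b + 1) * (e * a) := by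
    refine le_trans (specNorm_mul_le _ _) ?_
    have hB1 : specNorm (B⁻¹ + 1) ≤ b + 1 :=
      le_trans (specNorm_add_le _ _) (by linarith [specNorm_one_le (d := d)])
    have hFn : 0 ≤ specNorm ((B⁻¹ + 1) * F) := specNorm_nonneg _
    exact mul_le_mul hB1 m1 (specNorm_nonneg _) (by linarith)
  have hXnonneg : (0 : ℝ) ≤ 1 / 2 * a + 1 / 4 * (a * (c * (e * a))) :=
    add_nonneg (by linarith)
      (mul_nonneg (by norm_num) (mul_nonneg ha (mul_nonneg hc (mul_nonneg he ha))))
  calc specNorm (As⁻¹ - A⁻¹)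
      = specNorm (((1 / 2 : ℝ) • (A⁻¹ * C⁻¹)) * ((B⁻¹ + 1) * F)) := by
        rw [key, specNorm_neg]
    _ ≤ (1 / 2 * a + 1 / 4 * (a * (c * (e * a)))) * ((b + 1) * (e * a)) := by
        refine le_trans (specNorm_mul_le _ _) ?_
        exact mul_le_mul hXn hYn (specNorm_nonneg _) hXnonneg
    _ = (1 / 2 * a + 1 / 4 * a ^ 2 * e * c) * (a * e * (1 + b)) := by ring
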